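/- arXiv:math/0405530 — 3 statements merged into one kernel-verified Lean document; each statement's English description precedes it below -/
import Mathlib

section
/- For all natural numbers n and any real number m, ∑_{i=0}^{n} (-1)^i C(n,i) (m+i)^n = (-1)^n n!. -/
/-!
Up to the sign `(-1)^n`, the sum is Newton's expansion of the `n`-th forward difference of
`x ↦ x ^ n` at `m`, and that difference is the constant `n!`.
-/

open Finset Nat fwdDiff

theorem sum_range_neg_one_pow_mul_choose_mul_add_pow {R : Type*} [CommRing R] (n : ℕ) (m : R) :
    ∑ i ∈ range (n + 1), (-1 : R) ^ i * n.choose i * (m + i) ^ n = (-1) ^ n * n ! := by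
  have sign {i : ℕ} (hi : i ≤ n) : (-1 : R) ^ i = (-1) ^ n * (-1) ^ (n - i) := by
    obtain ⟨k, rfl⟩ := Nat.exists_eq_add_of_le hi
    rw [Nat.add_sub_cancel_left, pow_add, mul_assoc, ← pow_add, Even.neg_one_pow ⟨k, rfl⟩, mul_one]
  calc ∑ i ∈ range (n + 1), (-1 : R) ^ i * n.choose i * (m + i) ^ n
      = (-1) ^ n * ∑ i ∈ range (n + 1), ((-1 : ℤ) ^ (n - i) * n.choose i) • (m + i • 1) ^ n := by
        rw [mul_sum]
        refine sum_congr rfl fun i hi => ?_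
        rw [sign (Nat.lt_succ_iff.mp (mem_range.mp hi)), zsmul_eq_mul, nsmul_one]
        push_cast
        ring
    _ = (-1) ^ n * (Δ_[1])^[n] (· ^ n) m := by rw [fwdDiff_iter_eq_sum_shift]
    _ = (-1) ^ n * n ! := by rw [fwdDiff_iter_eq_factorial, Pi.natCast_apply]

/-- Alternating binomial sum of `(m+i)^n` equals `(-1)^n n!`. -/
theorem alternating_binomial_sum_pow_n (n : ℕ) (m : ℝ) :
    ∑ i ∈ Finset.range (n + 1), (-1 : ℝ) ^ i * (n.choose i : ℝ) * (m + i) ^ n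
      = (-1 : ℝ) ^ n * (Nat.factorial n : ℝ) :=
  sum_range_neg_one_pow_mul_choose_mul_add_pow n m
end

section
/- For all natural numbers n and any real number m, ∑_{i=0}^{n} (-1)^i C(n,i) (m+i)^{n+1} = (-1)^n (m + n/2) (n+1)!. -/
/-!
Up to the sign `(-1)^n`, the sum is the `n`-th forward difference of `x ↦ x^(n+1)` at `m`.
Since `Δ x^(n+2) = ∑_{i ≤ n+1} C(n+2,i) x^i` and `Δ^n` kills the powers below `n`, induction
on `n` gives `Δ^n x^(n+1) = (n+1)! x + C(n+1,2) n!`, which is `(n+1)! (x + n/2)`.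
-/

open Finset Nat fwdDiff

section ForwardDifference

variable {R : Type*} [CommRing R]

theorem fwdDiff_pow (j : ℕ) :
    Δ_[1] (fun r : R ↦ r ^ j) = ∑ i ∈ range j, j.choose i • fun r : R ↦ r ^ i := by
  ext x
  simp [nsmul_eq_mul, fwdDiff, add_pow, sum_range_succ, mul_comm]

theorem fwdDiff_iter_pow_succ (n : ℕ) (y : R) :
    (Δ_[1])^[n] (fun r : R ↦ r ^ (n + 1)) y = (n + 1)! * y + (n + 1).choose 2 * n ! := by
  induction n generalizing y with
  | zero => simp
  | succ n ih =>
    have hsymm : (n + 2).choose n = (n + 2).choose 2 := Nat.choose_symm_add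
    have hpascal : (n + 2).choose 2 = (n + 1).choose 2 + (n + 1) := by
      simp [Nat.choose_succ_succ', add_comm]
    have htriangle : ((n + 1).choose 2 : R) * 2 = (n + 1) * n := by
      have := congrArg (Nat.cast : ℕ → R) (Nat.add_one_mul_choose_eq n 1)
      push_cast [Nat.choose_one_right] at this
      linear_combination -this
    rw [Function.iterate_succ_apply, fwdDiff_pow, fwdDiff_iter_finsetSum, Finset.sum_apply,
      sum_range_succ, sum_range_succ, sum_eq_zero fun i hi ↦ ?_]
    · simp only [fwdDiff_iter_const_smul, Pi.smul_apply, ih, fwdDiff_iter_eq_factorial,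
        Pi.natCast_apply]
      rw [Nat.choose_succ_self_right, hsymm, hpascal]
      push_cast [nsmul_eq_mul, Nat.factorial_succ]
      linear_combination (n ! : R) * htriangle
    · rw [fwdDiff_iter_const_smul, fwdDiff_iter_pow_eq_zero_of_lt (by grind), smul_zero,
        Pi.zero_apply]

theorem neg_one_pow_mul_fwdDiff_iter_eq_sum_shift (f : R → R) (n : ℕ) (y : R) :
    (-1) ^ n * (Δ_[1])^[n] f y = ∑ i ∈ range (n + 1), (-1) ^ i * (n.choose i : R) * f (y + i) := by
  rw [fwdDiff_iter_eq_sum_shift, mul_sum]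
  refine sum_congr rfl fun i hi ↦ ?_
  obtain ⟨k, rfl⟩ := Nat.exists_eq_add_of_le (Nat.lt_succ_iff.mp (mem_range.mp hi))
  rw [add_tsub_cancel_left, zsmul_eq_mul, nsmul_one]
  push_cast
  have hsign : (-1 : R) ^ (i + k) * (-1) ^ k = (-1) ^ i := by
    rw [pow_add, mul_assoc, ← pow_add, ← two_mul, pow_mul, neg_one_sq, one_pow, mul_one]
  linear_combination ((i + k).choose i * f (y + i)) * hsign

end ForwardDifference

/-- Alternating binomial sum of `(m+i)^{n+1}` equals `(-1)^n (m + n/2) (n+1)!`. -/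
theorem alternating_binomial_sum_pow_succ (n : ℕ) (m : ℝ) :
    ∑ i ∈ Finset.range (n + 1), (-1 : ℝ) ^ i * (n.choose i : ℝ) * (m + i) ^ (n + 1)
      = (-1 : ℝ) ^ n * (m + n / 2) * (Nat.factorial (n + 1) : ℝ) := by
  rw [← neg_one_pow_mul_fwdDiff_iter_eq_sum_shift (fun r ↦ r ^ (n + 1)), fwdDiff_iter_pow_succ,
    Nat.cast_choose_two]
  push_cast [Nat.factorial_succ]
  ring
end

section
/- Truncated exponential-series identity: for natural n and real m, working in the ring of power series ℝ[[x]] modulo x^{n+2}, one has e^{mx}(1−e^x)^n = (−1)^n x^n (1 + (m + n/2)x) + O(x^{n+2}). -/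
open PowerSeries

noncomputable def E : ℝ⟦X⟧ := PowerSeries.mk fun k => 1 / (k+1).factorial

lemma coeff_E (k : ℕ) : coeff (R := ℝ) k E = 1 / (k+1).factorial := coeff_mk _ _

lemma one_sub_exp : (1 - exp ℝ) = - (X * E) := by
  ext k
  cases k with
  | zero =>
    simp [E, coeff_zero_eq_constantCoeff, constantCoeff_exp]
  | succ k =>
    rw [map_sub, map_neg, coeff_succ_X_mul, coeff_E, coeff_exp]
    rw [coeff_one]
    simp

lemma coeff_mul_zero (f g : ℝ⟦X⟧) : coeff (R := ℝ) 0 (f*g) = coeff (R := ℝ) 0 f * coeff (R := ℝ) 0 g := by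
  simp [coeff_mul]

lemma coeff_mul_one' (f g : ℝ⟦X⟧) :
    coeff (R := ℝ) 1 (f*g) = coeff (R := ℝ) 0 f * coeff (R := ℝ) 1 g + coeff (R := ℝ) 1 f * coeff (R := ℝ) 0 g := by
  rw [coeff_mul, Finset.Nat.antidiagonal_succ]
  simp [Finset.sum_map, Prod.map, add_comm]

lemma coeff_zero_E_pow (n : ℕ) : coeff (R := ℝ) 0 (E^n) = 1 := by
  induction n with
  | zero => simp
  | succ n ih => rw [pow_succ, coeff_mul_zero, ih, coeff_E]; simp

lemma coeff_one_E_pow (n : ℕ) : coeff (R := ℝ) 1 (E^n) = n / 2 := by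
  induction n with
  | zero => simp
  | succ n ih =>
    rw [pow_succ, coeff_mul_one', ih, coeff_zero_E_pow, coeff_E, coeff_E]
    norm_num [Nat.factorial]
    ring

lemma coeff_CXpow (a : ℝ) (G : ℝ⟦X⟧) (n k : ℕ) (hk : k < n + 2) :
    coeff (R := ℝ) k (PowerSeries.C (R := ℝ) a * X ^ n * G) =
      if k < n then 0 else if k = n then a * coeff (R := ℝ) 0 G else a * coeff (R := ℝ) 1 G := by
  rcases lt_trichotomy k n with h | h | h
  · rw [if_pos h]
    exact (X_pow_dvd_iff.mp ⟨PowerSeries.C (R := ℝ) a * G, by ring⟩) k h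
  · rw [if_neg (by omega), if_pos h, h, mul_assoc, coeff_C_mul]
    have := coeff_X_pow_mul G n 0
    rw [zero_add] at this
    rw [this]
  · have hk1 : k = n + 1 := by omega
    rw [if_neg (by omega), if_neg (by omega), hk1, mul_assoc, coeff_C_mul]
    have := coeff_X_pow_mul G n 1
    rw [add_comm 1 n] at this
    rw [this]

/-- Truncated exponential-series identity:
`e^{mx}(1 − e^x)^n = (−1)^n xⁿ (1 + (m + n/2) x) + O(x^{n+2})` in `ℝ[[x]]`. -/
theorem exp_one_sub_exp_pow_trunc (n : ℕ) (m : ℝ) :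
    ∀ k : ℕ, k < n + 2 →
      (PowerSeries.coeff (R := ℝ) k) (PowerSeries.rescale m (PowerSeries.exp ℝ) *
          (1 - PowerSeries.exp ℝ) ^ n)
        = (PowerSeries.coeff (R := ℝ) k) ((PowerSeries.C (R := ℝ) ((-1 : ℝ) ^ n)) * PowerSeries.X ^ n *
            (1 + PowerSeries.C (R := ℝ) (m + n / 2) * PowerSeries.X)) := by
  intro k hk
  have hC : ((-1 : ℝ⟦X⟧))^n = PowerSeries.C (R := ℝ) ((-1:ℝ)^n) := by
    rw [map_pow, map_neg, map_one]
  have hL : rescale m (exp ℝ) * (1 - exp ℝ) ^ n =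
      PowerSeries.C (R := ℝ) ((-1:ℝ)^n) * X ^ n * (E ^ n * rescale m (exp ℝ)) := by
    rw [one_sub_exp, neg_pow, mul_pow, hC]; ring
  rw [hL, coeff_CXpow _ _ _ _ hk, coeff_CXpow _ _ _ _ hk]
  have h0 : coeff (R := ℝ) 0 (E ^ n * rescale m (exp ℝ)) = 1 := by
    rw [coeff_mul_zero, coeff_zero_E_pow, coeff_rescale, coeff_exp]
    simp
  have h1 : coeff (R := ℝ) 1 (E ^ n * rescale m (exp ℝ)) = m + n / 2 := by
    rw [coeff_mul_one', coeff_zero_E_pow, coeff_one_E_pow, coeff_rescale, coeff_rescale,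
      coeff_exp, coeff_exp]
    simp [Nat.factorial]
  have g0 : coeff (R := ℝ) 0 (1 + PowerSeries.C (R := ℝ) (m + n/2) * X) = 1 := by simp
  have g1 : coeff (R := ℝ) 1 (1 + PowerSeries.C (R := ℝ) (m + n/2) * X) = m + n/2 := by
    simp [coeff_one]
  rw [h0, h1, g0, g1]
end
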